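/- arXiv:1903.05234 — 5 statements merged into one kernel-verified Lean document; each statement's English description precedes it below -/
import Mathlib

section
/- For the simple symmetric random walk Z on the integers started at 0, and integers a, b > 0, let T be the first hitting time of {-a, b}. Then for every s in (0,1), the generating function satisfies E[s^T] = (e^{d_s a} + e^{d_s b}) / (1 + e^{d_s (a+b)}), where d_s = log((1 + sqrt(1 - s^2))/s). -/
open MeasureTheory ProbabilityTheory Filter Topology Set

/-!
The `d` of the statement is `arcosh (1/s)`, so `s * cosh d = 1`. Then `g = exitGF d a b`
satisfies `s * (g (x + 1) + g (x - 1)) = 2 * g x` on all of `ℤ` and `g (-a) = g b = 1`, so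
`s ^ n * g (Z n)` is a martingale. Stopped at `T ∧ n` it stays bounded, hence
`E[s^(T ∧ n) g(Z_(T ∧ n))] = g 0`, and dominated convergence gives `E[s^T] = g 0` provided
`T < ∞` a.s. That in turn follows from the same optional stopping identity for the martingale
`Z n ^ 2 - n`: `E[T ∧ n] = E[Z_(T ∧ n)^2] ≤ (a + b)^2`.
-/

lemma log_one_add_sqrt_div_eq_arcosh {s : ℝ} (hs0 : 0 < s) :
    Real.log ((1 + √(1 - s ^ 2)) / s) = Real.arcosh s⁻¹ := by
  have hsqrt : √(s⁻¹ ^ 2 - 1) = √(1 - s ^ 2) / s := by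
    rw [show s⁻¹ ^ 2 - 1 = (1 - s ^ 2) / s ^ 2 by field_simp, Real.sqrt_div' _ (sq_nonneg s),
      Real.sqrt_sq hs0.le]
  rw [Real.arcosh, hsqrt]
  ring_nf

/-- The solution of `g (x + 1) + g (x - 1) = 2 * cosh d * g x` with `g (-a) = g b = 1`. -/
noncomputable def exitGF (d : ℝ) (a b : ℕ) (x : ℤ) : ℝ :=
  (Real.exp (d * (x + a)) + Real.exp (d * (b - x))) / (1 + Real.exp (d * (a + b)))

section exitGF

variable (d : ℝ) (a b : ℕ)

lemma exitGF_neg_left : exitGF d a b (-a) = 1 := by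
  rw [exitGF, div_eq_one_iff_eq (by positivity)]
  push_cast
  ring_nf
  simp

lemma exitGF_right : exitGF d a b b = 1 := by
  rw [exitGF, div_eq_one_iff_eq (by positivity)]
  ring_nf
  simp [add_comm]

lemma exitGF_add_one_add_exitGF_sub_one (x : ℤ) :
    exitGF d a b (x + 1) + exitGF d a b (x - 1) = 2 * Real.cosh d * exitGF d a b x := by
  simp only [exitGF, Real.cosh_eq]
  push_cast
  rw [← add_div, ← mul_div_assoc]
  congr 1
  simp only [mul_add, mul_sub, Real.exp_add, Real.exp_sub, mul_one, Real.exp_neg]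
  field_simp
  ring

end exitGF

lemma exists_abs_le_on_Iic_prod_Icc (h : ℕ → ℤ → ℝ) (n : ℕ) (l r : ℤ) :
    ∃ C, ∀ k ≤ n, ∀ z ∈ Icc l r, |h k z| ≤ C := by
  obtain ⟨C, hC⟩ := (((finite_Iic n).prod (finite_Icc l r)).image fun p => |h p.1 p.2|).bddAbove
  exact ⟨C, fun k hk z hz => hC ⟨(k, z), ⟨hk, hz⟩, rfl⟩⟩

lemma mem_Ioo_of_forall_le_notMem {z : ℕ → ℤ} {l r : ℤ} (hz : ∀ k, |z (k + 1) - z k| ≤ 1)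
    (h0 : z 0 ∈ Ioo l r) {n : ℕ} (hn : ∀ k ≤ n, z k ∉ ({l, r} : Set ℤ)) : z n ∈ Ioo l r := by
  induction n with
  | zero => exact h0
  | succ n ih =>
    have hzn := ih fun k hk => hn k (by omega)
    have hn1 := hn (n + 1) le_rfl
    have hstep := abs_le.1 (hz n)
    simp only [mem_Ioo, mem_insert_iff, mem_singleton_iff, not_or] at hzn hn1 ⊢
    omega

section Hitting

variable {Ω β : Type*} {u : ℕ → Ω → β} {s : Set β} {n : ℕ} {ω : Ω}

lemma hittingBtwn_zero_eq_of_forall_lt_notMem (h : ∀ k < n, u k ω ∉ s) :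
    hittingBtwn u s 0 n ω = n := by
  by_contra hne
  have hlt := lt_of_le_of_ne (hittingBtwn_le ω) hne
  exact h _ hlt (hittingBtwn_mem_set_of_hittingBtwn_lt hlt)

lemma hittingBtwn_zero_eq_sInf_of_le (hex : ∃ k, u k ω ∈ s)
    (hn : sInf {k | u k ω ∈ s} ≤ n) : hittingBtwn u s 0 n ω = sInf {k | u k ω ∈ s} :=
  le_antisymm (hittingBtwn_le_of_mem (Nat.zero_le _) hn (Nat.sInf_mem hex))
    (Nat.sInf_le (hittingBtwn_mem_set ⟨_, ⟨Nat.zero_le _, hn⟩, Nat.sInf_mem hex⟩))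

lemma measurable_hittingBtwn {mΩ : MeasurableSpace Ω} [MeasurableSpace β]
    (hu : ∀ k, Measurable (u k)) (hs : MeasurableSet s) (m : ℕ) :
    Measurable (hittingBtwn u s 0 m) := by
  have hτ := Adapted.isStoppingTime_hittingBtwn (f := Filtration.const ℕ mΩ le_rfl) (n := 0)
    (n' := m) hu hs
  refine measurable_to_countable' fun i => ?_
  have := hτ.measurableSet_eq i
  simp only [WithTop.coe_eq_coe] at this
  exact this

lemma apply_hittingBtwn_mem_Icc {Z : ℕ → Ω → ℤ} {l r : ℤ}
    (hZ : ∀ k, |Z (k + 1) ω - Z k ω| ≤ 1) (h0 : Z 0 ω ∈ Ioo l r) (n : ℕ) :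
    Z (hittingBtwn Z {l, r} 0 n ω) ω ∈ Icc l r := by
  by_cases hhit : ∃ j ∈ Icc 0 n, Z j ω ∈ ({l, r} : Set ℤ)
  · have hlr : l ≤ r := (h0.1.trans h0.2).le
    rcases hittingBtwn_mem_set hhit with h | h <;> rw [h] <;> simp [hlr]
  · push Not at hhit
    rw [hittingBtwn_zero_eq_of_forall_lt_notMem fun k hk => hhit k ⟨k.zero_le, hk.le⟩]
    exact Ioo_subset_Icc_self <|
      mem_Ioo_of_forall_le_notMem hZ h0 fun k hk => hhit k ⟨k.zero_le, hk⟩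

noncomputable def stoppedEval (h : ℕ → β → ℝ) (u : ℕ → Ω → β) (s : Set β) (n : ℕ) (ω : Ω) : ℝ :=
  h (hittingBtwn u s 0 n ω) (u (hittingBtwn u s 0 n ω) ω)

lemma stoppedEval_succ_sub (h : ℕ → β → ℝ) (n : ℕ) (ω : Ω) :
    stoppedEval h u s (n + 1) ω - stoppedEval h u s n ω =
      {ω | ∀ k ≤ n, u k ω ∉ s}.indicator (fun ω => h (n + 1) (u (n + 1) ω) - h n (u n ω)) ω := by
  by_cases hω : ∀ k ≤ n, u k ω ∉ s
  · rw [indicator_of_mem (show ω ∈ {ω | ∀ k ≤ n, u k ω ∉ s} from hω), stoppedEval, stoppedEval,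
      hittingBtwn_zero_eq_of_forall_lt_notMem fun k hk => hω k (by omega),
      hittingBtwn_zero_eq_of_forall_lt_notMem fun k hk => hω k hk.le]
  · push Not at hω
    obtain ⟨k, hk, hks⟩ := hω
    rw [indicator_of_notMem (by simpa using ⟨k, hk, hks⟩), stoppedEval, stoppedEval,
      ← hittingBtwn_eq_hittingBtwn_of_exists n.le_succ ⟨k, ⟨k.zero_le, hk⟩, hks⟩, sub_self]

lemma measurable_stoppedEval [MeasurableSpace Ω] [MeasurableSpace β] [Countable β]
    [MeasurableSingletonClass β] (hu : ∀ k, Measurable (u k)) (hs : MeasurableSet s)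
    (h : ℕ → β → ℝ) (n : ℕ) : Measurable (stoppedEval h u s n) := by
  have hτ := measurable_hittingBtwn hu hs n
  have hval : Measurable fun ω => u (hittingBtwn u s 0 n ω) ω :=
    (measurable_from_prod_countable_right (f := fun p : ℕ × Ω => u p.1 p.2) hu).comp
      (hτ.prodMk measurable_id)
  exact (measurable_of_countable fun p : ℕ × β => h p.1 p.2).comp (hτ.prodMk hval)

end Hitting

section FairStep

variable {Ω : Type*} {m mΩ : MeasurableSpace Ω} {μ : Measure Ω} [IsProbabilityMeasure μ]

lemma ae_eq_one_or_eq_neg_one {X : Ω → ℤ} (hX : Measurable X) (h₁ : μ {ω | X ω = 1} = 1 / 2)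
    (h₂ : μ {ω | X ω = -1} = 1 / 2) : ∀ᵐ ω ∂μ, X ω = 1 ∨ X ω = -1 := by
  have hmeas : ∀ e : ℤ, MeasurableSet {ω | X ω = e} := fun e => hX (measurableSet_singleton e)
  have hdisj : Disjoint {ω | X ω = 1} {ω | X ω = -1} :=
    disjoint_left.2 fun ω h₁ h₂ => by simp_all
  refine mem_ae_iff.2 <| (prob_compl_eq_zero_iff ((hmeas 1).union (hmeas (-1)))).2 ?_
  rw [measure_union hdisj (hmeas (-1)), h₁, h₂, ENNReal.add_halves]

lemma integral_comp_eq_half_add_half {X : Ω → ℤ} (hX : Measurable X)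
    (hind : Indep m (MeasurableSpace.comap X inferInstance) μ)
    (h₁ : μ {ω | X ω = 1} = 1 / 2) (h₂ : μ {ω | X ω = -1} = 1 / 2) {f : ℤ → Ω → ℝ}
    (hfm : ∀ e, Measurable[m] (f e)) (hf₁ : Integrable (f 1) μ) (hf₂ : Integrable (f (-1)) μ) :
    ∫ ω, f (X ω) ω ∂μ = (∫ ω, f 1 ω ∂μ + ∫ ω, f (-1) ω ∂μ) / 2 := by
  let δ : ℤ → ℤ → ℝ := fun e z => if z = e then 1 else 0
  have hterm : ∀ e, μ {ω | X ω = e} = 1 / 2 → Integrable (f e) μ →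
      ∫ ω, f e ω * δ e (X ω) ∂μ = (∫ ω, f e ω ∂μ) / 2 := by
    intro e he hfi
    have hindep : IndepFun (f e) (fun ω => δ e (X ω)) μ := (IndepFun_iff_Indep _ _ _).2 <|
      indep_of_indep_of_le_right (indep_of_indep_of_le_left hind (hfm e).comap_le)
        ((measurable_of_countable (δ e)).comp (comap_measurable X)).comap_le
    have hδ : ∫ ω, δ e (X ω) ∂μ = 1 / 2 := by
      have hδ_eq : (fun ω => δ e (X ω)) = {ω | X ω = e}.indicator 1 := by
        ext ω
        simp [δ, indicator_apply]
      rw [hδ_eq, integral_indicator_one (s := {ω | X ω = e}) (hX (measurableSet_singleton e)),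
        measureReal_def, he]
      simp
    rw [hindep.integral_fun_mul_eq_mul_integral hfi.aestronglyMeasurable
      ((measurable_of_countable (δ e)).comp hX).aestronglyMeasurable, hδ, mul_one_div]
  have hint : ∀ e, Integrable (f e) μ → Integrable (fun ω => f e ω * δ e (X ω)) μ := fun e hfi =>
    hfi.mul_bdd ((measurable_of_countable (δ e)).comp hX).aestronglyMeasurable
      (c := 1) (Eventually.of_forall fun ω => by by_cases h : X ω = e <;> simp [δ, h])
  calc ∫ ω, f (X ω) ω ∂μ = ∫ ω, f 1 ω * δ 1 (X ω) + f (-1) ω * δ (-1) (X ω) ∂μ := by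
        refine integral_congr_ae ?_
        filter_upwards [ae_eq_one_or_eq_neg_one hX h₁ h₂] with ω hω
        rcases hω with h | h <;> simp [δ, h]
    _ = (∫ ω, f 1 ω ∂μ + ∫ ω, f (-1) ω ∂μ) / 2 := by
        rw [integral_add (hint 1 hf₁) (hint (-1) hf₂), hterm 1 h₁ hf₁, hterm (-1) h₂ hf₂, add_div]

end FairStep

section Walk

variable {Ω : Type*} {ξ : ℕ → Ω → ℤ} {Z : ℕ → Ω → ℤ} {l r : ℤ}

abbrev pastSteps (ξ : ℕ → Ω → ℤ) (n : ℕ) : MeasurableSpace Ω :=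
  ⨆ i ∈ Iio n, MeasurableSpace.comap (ξ i) inferInstance

lemma measurable_pastSteps_walk (hZ : ∀ n ω, Z n ω = ∑ k ∈ Finset.range n, ξ k ω) {k n : ℕ}
    (hk : k ≤ n) : Measurable[pastSteps ξ n] (Z k) := by
  rw [show Z k = fun ω => ∑ i ∈ Finset.range k, ξ i ω from funext (hZ k)]
  refine Finset.measurable_sum _ fun i hi => (comap_measurable (ξ i)).mono ?_ le_rfl
  exact le_iSup₂ (f := fun i (_ : i ∈ Iio n) => MeasurableSpace.comap (ξ i) inferInstance) i
    (by simp only [Finset.mem_range, mem_Iio] at hi ⊢; omega)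

lemma measurableSet_pastSteps_forall_notMem (hZ : ∀ n ω, Z n ω = ∑ k ∈ Finset.range n, ξ k ω)
    (n : ℕ) (S : Set ℤ) : MeasurableSet[pastSteps ξ n] {ω | ∀ k ≤ n, Z k ω ∉ S} := by
  simp only [ofPred_forall]
  exact .iInter fun k => .iInter fun hk =>
    (measurable_pastSteps_walk hZ hk (MeasurableSet.of_discrete)).compl

variable [MeasurableSpace Ω] {μ : Measure Ω}

structure IsFairSteps (ξ : ℕ → Ω → ℤ) (μ : Measure Ω) : Prop where
  measurable : ∀ i, Measurable (ξ i)
  indep : iIndepFun ξ μ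
  measure_eq : ∀ i, μ {ω | ξ i ω = 1} = 1 / 2 ∧ μ {ω | ξ i ω = -1} = 1 / 2

namespace IsFairSteps

lemma pastSteps_le (hξ : IsFairSteps ξ μ) (n : ℕ) : pastSteps ξ n ≤ ‹MeasurableSpace Ω› :=
  iSup₂_le fun i _ => (hξ.measurable i).comap_le

lemma measurable_walk (hξ : IsFairSteps ξ μ) (hZ : ∀ n ω, Z n ω = ∑ k ∈ Finset.range n, ξ k ω)
    (k : ℕ) : Measurable (Z k) :=
  (measurable_pastSteps_walk hZ le_rfl).mono (hξ.pastSteps_le k) le_rfl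

lemma indep_pastSteps (hξ : IsFairSteps ξ μ) (n : ℕ) :
    Indep (pastSteps ξ n) (MeasurableSpace.comap (ξ n) inferInstance) μ := by
  simpa [pastSteps] using indep_iSup_of_disjoint (fun i => (hξ.measurable i).comap_le)
    hξ.indep.iIndep (S := Iio n) (T := {n}) (by simp)

variable [IsProbabilityMeasure μ]

lemma ae_abs_walk_succ_sub_le (hξ : IsFairSteps ξ μ)
    (hZ : ∀ n ω, Z n ω = ∑ k ∈ Finset.range n, ξ k ω) :
    ∀ᵐ ω ∂μ, ∀ k, |Z (k + 1) ω - Z k ω| ≤ 1 := by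
  rw [ae_all_iff]
  intro k
  filter_upwards [ae_eq_one_or_eq_neg_one (hξ.measurable k) (hξ.measure_eq k).1
    (hξ.measure_eq k).2] with ω hω
  rw [hZ, hZ, Finset.sum_range_succ, add_sub_cancel_left]
  rcases hω with h | h <;> simp [h]

lemma ae_apply_hittingBtwn_mem_Icc (hξ : IsFairSteps ξ μ)
    (hZ : ∀ n ω, Z n ω = ∑ k ∈ Finset.range n, ξ k ω) (hl : l < 0) (hr : 0 < r) :
    ∀ᵐ ω ∂μ, ∀ n, Z (hittingBtwn Z {l, r} 0 n ω) ω ∈ Icc l r := by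
  filter_upwards [hξ.ae_abs_walk_succ_sub_le hZ] with ω hω n
  exact apply_hittingBtwn_mem_Icc hω (by simp [hZ, hl, hr]) n

lemma integrable_stoppedEval (hξ : IsFairSteps ξ μ)
    (hZ : ∀ n ω, Z n ω = ∑ k ∈ Finset.range n, ξ k ω) (hl : l < 0) (hr : 0 < r)
    (h : ℕ → ℤ → ℝ) (n : ℕ) : Integrable (stoppedEval h Z {l, r} n) μ := by
  obtain ⟨C, hC⟩ := exists_abs_le_on_Iic_prod_Icc h n l r
  refine Integrable.of_bound (measurable_stoppedEval (hξ.measurable_walk hZ)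
    .of_discrete h n).aestronglyMeasurable C ?_
  filter_upwards [hξ.ae_apply_hittingBtwn_mem_Icc hZ hl hr] with ω hω
  exact hC _ (hittingBtwn_le ω) _ (hω n)

lemma integrable_indicator_step (hξ : IsFairSteps ξ μ)
    (hZ : ∀ n ω, Z n ω = ∑ k ∈ Finset.range n, ξ k ω) (hl : l < 0) (hr : 0 < r)
    (h : ℕ → ℤ → ℝ) (n : ℕ) {e : ℤ} (he : |e| ≤ 1) :
    Integrable ({ω | ∀ k ≤ n, Z k ω ∉ ({l, r} : Set ℤ)}.indicator
      fun ω => h (n + 1) (Z n ω + e) - h n (Z n ω)) μ := by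
  set A := {ω | ∀ k ≤ n, Z k ω ∉ ({l, r} : Set ℤ)}
  obtain ⟨C, hC⟩ := exists_abs_le_on_Iic_prod_Icc h (n + 1) l r
  have hC0 : 0 ≤ C := (abs_nonneg _).trans (hC 0 (by omega) 0 ⟨hl.le, hr.le⟩)
  have hmeas : Measurable fun ω => h (n + 1) (Z n ω + e) - h n (Z n ω) :=
    (measurable_of_countable fun z => h (n + 1) (z + e) - h n z).comp (hξ.measurable_walk hZ n)
  refine Integrable.of_bound (hmeas.indicator <| hξ.pastSteps_le n _ <|
    measurableSet_pastSteps_forall_notMem hZ n _).aestronglyMeasurable (C + C) ?_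
  filter_upwards [hξ.ae_abs_walk_succ_sub_le hZ] with ω hω
  by_cases hωA : ω ∈ A
  · obtain ⟨hlZ, hZr⟩ := mem_Ioo_of_forall_le_notMem hω (by simp [hZ, hl, hr]) hωA
    have he' := abs_le.1 he
    rw [Real.norm_eq_abs, indicator_of_mem hωA]
    exact (abs_sub _ _).trans (add_le_add (hC _ le_rfl _ ⟨by omega, by omega⟩)
      (hC _ (by omega) _ ⟨hlZ.le, hZr.le⟩))
  · rw [indicator_of_notMem hωA, norm_zero]
    linarith

lemma integral_stoppedEval_succ (hξ : IsFairSteps ξ μ)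
    (hZ : ∀ n ω, Z n ω = ∑ k ∈ Finset.range n, ξ k ω) (hl : l < 0) (hr : 0 < r)
    {h : ℕ → ℤ → ℝ} (hh : ∀ k z, h (k + 1) (z + 1) + h (k + 1) (z - 1) = 2 * h k z) (n : ℕ) :
    ∫ ω, stoppedEval h Z {l, r} (n + 1) ω ∂μ = ∫ ω, stoppedEval h Z {l, r} n ω ∂μ := by
  set A := {ω | ∀ k ≤ n, Z k ω ∉ ({l, r} : Set ℤ)}
  set f : ℤ → Ω → ℝ := fun e => A.indicator fun ω => h (n + 1) (Z n ω + e) - h n (Z n ω)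
  have hdiff : ∀ ω, stoppedEval h Z {l, r} (n + 1) ω - stoppedEval h Z {l, r} n ω =
      f (ξ n ω) ω := by
    intro ω
    have hZs : Z (n + 1) ω = Z n ω + ξ n ω := by rw [hZ, hZ, Finset.sum_range_succ]
    simp only [stoppedEval_succ_sub, f, A, indicator_apply, hZs]
  have hfm : ∀ e, Measurable[pastSteps ξ n] (f e) := fun e =>
    ((measurable_of_countable fun z => h (n + 1) (z + e) - h n z).comp
      (measurable_pastSteps_walk hZ le_rfl)).indicator
      (measurableSet_pastSteps_forall_notMem hZ n _)
  have hf₁ : Integrable (f 1) μ := hξ.integrable_indicator_step hZ hl hr h n (by norm_num)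
  have hf₂ : Integrable (f (-1)) μ := hξ.integrable_indicator_step hZ hl hr h n (by norm_num)
  have hcancel : ∀ ω, f 1 ω + f (-1) ω = 0 := by
    intro ω
    by_cases hωA : ω ∈ A
    · simp only [f, indicator_of_mem hωA, ← sub_eq_add_neg]
      linarith [hh n (Z n ω)]
    · simp [f, hωA]
  rw [← sub_eq_zero, ← integral_sub (hξ.integrable_stoppedEval hZ hl hr h (n + 1))
    (hξ.integrable_stoppedEval hZ hl hr h n)]
  calc ∫ ω, stoppedEval h Z {l, r} (n + 1) ω - stoppedEval h Z {l, r} n ω ∂μ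
      = ∫ ω, f (ξ n ω) ω ∂μ := by simp_rw [hdiff]
    _ = (∫ ω, f 1 ω ∂μ + ∫ ω, f (-1) ω ∂μ) / 2 :=
        integral_comp_eq_half_add_half (hξ.measurable n) (hξ.indep_pastSteps n)
          (hξ.measure_eq n).1 (hξ.measure_eq n).2 hfm hf₁ hf₂
    _ = 0 := by
        rw [← integral_add hf₁ hf₂]
        simp only [hcancel, integral_zero, zero_div]

theorem integral_stoppedEval (hξ : IsFairSteps ξ μ)
    (hZ : ∀ n ω, Z n ω = ∑ k ∈ Finset.range n, ξ k ω) (hl : l < 0) (hr : 0 < r)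
    {h : ℕ → ℤ → ℝ} (hh : ∀ k z, h (k + 1) (z + 1) + h (k + 1) (z - 1) = 2 * h k z) (n : ℕ) :
    ∫ ω, stoppedEval h Z {l, r} n ω ∂μ = h 0 0 := by
  induction n with
  | zero => simp [stoppedEval, hittingBtwn_of_le le_rfl, hZ]
  | succ n ih => rw [hξ.integral_stoppedEval_succ hZ hl hr hh, ih]

lemma integral_hittingBtwn_le (hξ : IsFairSteps ξ μ)
    (hZ : ∀ n ω, Z n ω = ∑ k ∈ Finset.range n, ξ k ω) (hl : l < 0) (hr : 0 < r) (n : ℕ) :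
    ∫ ω, ((hittingBtwn Z {l, r} 0 n ω : ℕ) : ℝ) ∂μ ≤ ((r : ℝ) - l) ^ 2 := by
  have hsq := hξ.integrable_stoppedEval hZ hl hr (fun _ (z : ℤ) => (z : ℝ) ^ 2) n
  have hmart := hξ.integrable_stoppedEval hZ hl hr (fun (k : ℕ) (z : ℤ) => (z : ℝ) ^ 2 - k) n
  have hzero := hξ.integral_stoppedEval hZ hl hr (h := fun (k : ℕ) (z : ℤ) => (z : ℝ) ^ 2 - k)
    (fun k z => by push_cast; ring) n
  have hbound : ∀ᵐ ω ∂μ,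
      stoppedEval (fun _ (z : ℤ) => (z : ℝ) ^ 2) Z {l, r} n ω ≤ ((r : ℝ) - l) ^ 2 := by
    filter_upwards [hξ.ae_apply_hittingBtwn_mem_Icc hZ hl hr] with ω hω
    obtain ⟨h₁, h₂⟩ := hω n
    have h₁' : (l : ℝ) ≤ _ := Int.cast_le.2 h₁
    have h₂' : _ ≤ (r : ℝ) := Int.cast_le.2 h₂
    have hl' : (l : ℝ) < 0 := Int.cast_lt_zero.2 hl
    have hr' : (0 : ℝ) < r := Int.cast_pos.2 hr
    simp only [stoppedEval]
    nlinarith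
  calc ∫ ω, ((hittingBtwn Z {l, r} 0 n ω : ℕ) : ℝ) ∂μ
      = ∫ ω, stoppedEval (fun _ (z : ℤ) => (z : ℝ) ^ 2) Z {l, r} n ω -
          stoppedEval (fun (k : ℕ) (z : ℤ) => (z : ℝ) ^ 2 - k) Z {l, r} n ω ∂μ := by
        simp [stoppedEval]
    _ ≤ ((r : ℝ) - l) ^ 2 := by
        rw [integral_sub hsq hmart, hzero]
        simpa using integral_mono_ae hsq (integrable_const _) hbound

lemma ae_exists_walk_mem (hξ : IsFairSteps ξ μ)
    (hZ : ∀ n ω, Z n ω = ∑ k ∈ Finset.range n, ξ k ω) (hl : l < 0) (hr : 0 < r) :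
    ∀ᵐ ω ∂μ, ∃ k, Z k ω ∈ ({l, r} : Set ℤ) := by
  set N := {ω | ∀ k, Z k ω ∉ ({l, r} : Set ℤ)}
  have hN : ∀ n : ℕ, n * μ.real N ≤ ((r : ℝ) - l) ^ 2 := by
    intro n
    calc n * μ.real N ≤ n * μ.real {ω | (n : ℝ) ≤ hittingBtwn Z {l, r} 0 n ω} := by
          refine mul_le_mul_of_nonneg_left (measureReal_mono fun ω hω => ?_) n.cast_nonneg
          simp [hittingBtwn_zero_eq_of_forall_lt_notMem fun k _ => hω k]
      _ ≤ ∫ ω, ((hittingBtwn Z {l, r} 0 n ω : ℕ) : ℝ) ∂μ :=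
          mul_meas_ge_le_integral_of_nonneg (ae_of_all _ fun ω => Nat.cast_nonneg _)
            (hξ.integrable_stoppedEval hZ hl hr (fun k _ => (k : ℝ)) n) n
      _ ≤ _ := hξ.integral_hittingBtwn_le hZ hl hr n
  have hN0 : μ.real N = 0 := by
    by_contra hne
    have hpos : 0 < μ.real N := lt_of_le_of_ne measureReal_nonneg (Ne.symm hne)
    obtain ⟨n, hn⟩ := exists_nat_gt (((r : ℝ) - l) ^ 2 / μ.real N)
    rw [div_lt_iff₀ hpos] at hn
    linarith [hN n]
  rw [ae_iff]
  simpa [N, measureReal_eq_zero_iff] using hN0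

theorem integral_pow_sInf_eq (hξ : IsFairSteps ξ μ)
    (hZ : ∀ n ω, Z n ω = ∑ k ∈ Finset.range n, ξ k ω) (hl : l < 0) (hr : 0 < r)
    {s : ℝ} (hs : |s| ≤ 1) {g : ℤ → ℝ} (hg : ∀ z, s * (g (z + 1) + g (z - 1)) = 2 * g z)
    (hgl : g l = 1) (hgr : g r = 1) :
    ∫ ω, s ^ sInf {n | Z n ω ∈ ({l, r} : Set ℤ)} ∂μ = g 0 := by
  set Y := stoppedEval (fun k z => s ^ k * g z) Z {l, r}
  have hY : ∀ n, ∫ ω, Y n ω ∂μ = g 0 := fun n => by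
    simpa using hξ.integral_stoppedEval hZ hl hr (h := fun k z => s ^ k * g z)
      (fun k z => by rw [pow_succ]; linear_combination s ^ k * hg z) n
  obtain ⟨C, hC⟩ := exists_abs_le_on_Iic_prod_Icc (fun _ z => g z) 0 l r
  have hlim : Tendsto (fun n => ∫ ω, Y n ω ∂μ) atTop
      (𝓝 (∫ ω, s ^ sInf {n | Z n ω ∈ ({l, r} : Set ℤ)} ∂μ)) := by
    refine tendsto_integral_of_dominated_convergence (fun _ => C)
      (fun n =>
        (measurable_stoppedEval (hξ.measurable_walk hZ) .of_discrete _ n).aestronglyMeasurable)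
      (integrable_const C) (fun n => ?_) ?_
    · filter_upwards [hξ.ae_apply_hittingBtwn_mem_Icc hZ hl hr] with ω hω
      rw [Real.norm_eq_abs]
      simp only [Y, stoppedEval, abs_mul, abs_pow]
      exact (mul_le_of_le_one_left (abs_nonneg _) (pow_le_one₀ (abs_nonneg s) hs)).trans
        (hC 0 le_rfl _ (hω n))
    · filter_upwards [hξ.ae_exists_walk_mem hZ hl hr] with ω hω
      refine tendsto_const_nhds.congr'
        (eventually_atTop.2 ⟨sInf {k | Z k ω ∈ ({l, r} : Set ℤ)}, fun n hn => ?_⟩)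
      have hg1 : g (Z (sInf {k | Z k ω ∈ ({l, r} : Set ℤ)}) ω) = 1 := by
        have hmem : Z (sInf {k | Z k ω ∈ ({l, r} : Set ℤ)}) ω ∈ ({l, r} : Set ℤ) :=
          Nat.sInf_mem hω
        rcases hmem with h | h
        · rw [h, hgl]
        · rw [mem_singleton_iff.1 h, hgr]
      simp only [Y, stoppedEval, hittingBtwn_zero_eq_sInf_of_le hω hn, hg1, mul_one]
  exact tendsto_nhds_unique hlim (by simp [hY])

end IsFairSteps

end Walk

theorem hitting_time_generating_function {Ω : Type*} [MeasurableSpace Ω]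
    (μ : Measure Ω) [IsProbabilityMeasure μ]
    (ξ : ℕ → Ω → ℤ) (hmeas : ∀ i, Measurable (ξ i))
    (hindep : iIndepFun ξ μ)
    (hdist : ∀ i, μ {ω | ξ i ω = 1} = 1/2 ∧ μ {ω | ξ i ω = -1} = 1/2)
    (a b : ℕ) (ha : 0 < a) (hb : 0 < b)
    (s : ℝ) (hs : s ∈ Set.Ioo (0:ℝ) 1)
    (Z : ℕ → Ω → ℤ) (hZ : ∀ n ω, Z n ω = ∑ k ∈ Finset.range n, ξ k ω)
    (T : Ω → ℕ) (hT : ∀ ω, T ω = sInf {n | Z n ω = -(a:ℤ) ∨ Z n ω = (b:ℤ)})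
    (d : ℝ) (hd : d = Real.log ((1 + Real.sqrt (1 - s^2)) / s)) :
    ∫ ω, s ^ (T ω) ∂μ
      = (Real.exp (d * a) + Real.exp (d * b)) / (1 + Real.exp (d * (a + b))) := by
  obtain ⟨hs0, hs1⟩ := hs
  have hcosh : s * Real.cosh d = 1 := by
    rw [hd, log_one_add_sqrt_div_eq_arcosh hs0, Real.cosh_arcosh ((one_le_inv₀ hs0).2 hs1.le),
      mul_inv_cancel₀ hs0.ne']
  have hgen := IsFairSteps.integral_pow_sInf_eq ⟨hmeas, hindep, hdist⟩ hZ
    (l := -a) (r := b) (by omega) (by omega) (abs_le.2 ⟨by linarith, hs1.le⟩)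
    (g := exitGF d a b) (fun z => by
      rw [exitGF_add_one_add_exitGF_sub_one]; linear_combination 2 * exitGF d a b z * hcosh)
    (exitGF_neg_left d a b) (exitGF_right d a b)
  simp_rw [hT]
  exact hgen.trans (by simp [exitGF])
end

section
/- For every positive integer c, 2^{2c} ∫_0^∞ (e^x/(e^x+1)^2)^c dx = Σ_{j=0}^{c-1} binom(c-1, j) (1/(j - 2c + 1)) 2^{j+1} (-1)^{c-j}. -/
/-!
With `u = eˣ + 1` the integrand is `eˣ (u - 1)^(c-1) / u^(2c)`. Expanding `(u - 1)^(c-1)`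
binomially gives the primitive `∑ⱼ C(c-1, j) (-1)^(c-1-j) u^(j-2c+1) / (j-2c+1)`; every exponent
`j - 2c + 1` is negative, so it vanishes at `+∞`, and its value at `x = 0` (i.e. `u = 2`),
multiplied by `-2^(2c)`, is the stated sum.
-/

open Real Filter Topology MeasureTheory Finset

theorem sub_one_div_sq_pow_succ {K : Type*} [Field K] {u : K} (hu : u ≠ 0) (n : ℕ) :
    ((u - 1) / u ^ 2) ^ (n + 1) = (u - 1) *
      ∑ j ∈ range (n + 1), (n.choose j : K) * (-1) ^ (n - j) * u ^ ((j : ℤ) - 2 * n - 2) := by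
  have hpow (j : ℕ) : u ^ ((j : ℤ) - 2 * n - 2) = u ^ j / (u ^ 2) ^ (n + 1) := by
    rw [show (j : ℤ) - 2 * n - 2 = j - ((2 * (n + 1) : ℕ) : ℤ) by push_cast; ring,
      zpow_sub₀ hu, zpow_natCast, zpow_natCast, pow_mul]
  simp_rw [hpow, mul_div_assoc', ← Finset.sum_div]
  rw [div_pow, pow_succ', ← mul_div_assoc, sub_eq_add_neg, add_pow]
  congr 2
  exact Finset.sum_congr rfl fun j _ => by ring

theorem natCast_sub_two_mul_sub_one_lt_zero {n j : ℕ} (hj : j < n + 1) :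
    (j : ℤ) - 2 * n - 1 < 0 := by
  omega

theorem hasDerivAt_exp_add_one_zpow_div {m : ℤ} (hm : m ≠ 0) (x : ℝ) :
    HasDerivAt (fun x => (exp x + 1) ^ m / (m : ℝ)) (exp x * (exp x + 1) ^ (m - 1)) x := by
  have hm' : (m : ℝ) ≠ 0 := by exact_mod_cast hm
  refine (((hasDerivAt_zpow m _ (Or.inl (by positivity))).comp x
    ((hasDerivAt_exp x).add_const 1)).div_const (m : ℝ)).congr_deriv ?_
  field_simp

noncomputable def logisticPowPrimitive (n : ℕ) (x : ℝ) : ℝ :=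
  ∑ j ∈ range (n + 1), (n.choose j : ℝ) * (-1) ^ (n - j) *
    ((exp x + 1) ^ ((j : ℤ) - 2 * n - 1) / (((j : ℤ) - 2 * n - 1 : ℤ) : ℝ))

theorem hasDerivAt_logisticPowPrimitive (n : ℕ) (x : ℝ) :
    HasDerivAt (logisticPowPrimitive n) ((exp x / (exp x + 1) ^ 2) ^ (n + 1)) x := by
  refine (HasDerivAt.fun_sum fun j hj => (hasDerivAt_exp_add_one_zpow_div
    (natCast_sub_two_mul_sub_one_lt_zero (mem_range.mp hj)).ne x).const_mul
      ((n.choose j : ℝ) * (-1) ^ (n - j))).congr_deriv ?_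
  have hexpand := sub_one_div_sq_pow_succ (u := exp x + 1) (by positivity) n
  rw [add_sub_cancel_right] at hexpand
  rw [hexpand, mul_sum]
  refine sum_congr rfl fun j _ => ?_
  rw [show (j : ℤ) - 2 * n - 1 - 1 = (j : ℤ) - 2 * n - 2 by ring]
  ring

theorem tendsto_logisticPowPrimitive_atTop (n : ℕ) :
    Tendsto (logisticPowPrimitive n) atTop (𝓝 0) := by
  have hu : Tendsto (fun x => exp x + 1) atTop atTop :=
    tendsto_atTop_add_const_right _ 1 tendsto_exp_atTop
  have h := tendsto_finsetSum (range (n + 1)) fun j hj =>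
    (((tendsto_zpow_atTop_zero (natCast_sub_two_mul_sub_one_lt_zero (mem_range.mp hj))).comp
      hu).div_const (((j : ℤ) - 2 * n - 1 : ℤ) : ℝ)).const_mul ((n.choose j : ℝ) * (-1) ^ (n - j))
  simp only [zero_div, mul_zero, sum_const_zero] at h
  exact h

theorem integral_Ioi_exp_div_exp_add_one_sq_pow (n : ℕ) :
    ∫ x in Set.Ioi (0 : ℝ), (exp x / (exp x + 1) ^ 2) ^ (n + 1) = -logisticPowPrimitive n 0 := by
  rw [integral_Ioi_of_hasDerivAt_of_nonneg' (fun x _ => hasDerivAt_logisticPowPrimitive n x)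
    (fun x _ => by positivity) (tendsto_logisticPowPrimitive_atTop n), zero_sub]

theorem J_one_integer_c (c : ℕ) (hc : 0 < c) :
    (2 : ℝ) ^ (2 * c) * ∫ x in Set.Ioi (0:ℝ), (Real.exp x / (Real.exp x + 1)^2) ^ c
      = ∑ j ∈ Finset.range c,
          ((c - 1).choose j : ℝ) * (1 / ((j : ℝ) - 2 * c + 1))
            * 2 ^ (j + 1) * (-1 : ℝ) ^ (c - j) := by
  obtain ⟨n, rfl⟩ := Nat.exists_eq_add_of_lt hc
  rw [zero_add, integral_Ioi_exp_div_exp_add_one_sq_pow, logisticPowPrimitive, mul_neg, mul_sum,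
    ← sum_neg_distrib, Nat.add_sub_cancel]
  refine sum_congr rfl fun j hj => ?_
  have hjn : j ≤ n := Nat.lt_succ_iff.mp (mem_range.mp hj)
  have hpow_two : (2 : ℝ) ^ (2 * (n + 1)) * 2 ^ ((j : ℤ) - 2 * n - 1) = 2 ^ (j + 1) := by
    rw [← zpow_natCast, ← zpow_add₀ two_ne_zero, ← zpow_natCast]
    congr 1
    push_cast
    ring
  rw [exp_zero, one_add_one_eq_two, ← hpow_two, Nat.succ_sub hjn, pow_succ]
  push_cast
  ring
end

section
/- For s ∈ (0,1), d_s = log((1 + sqrt(1-s^2))/s), and any real x > 0, the quantity g_x(s) := (e^{d_s} + e^{d_s(x-1)})/(1 + e^{d_s x}) satisfies g_x(s) = (1/s)(1 - a(d_s x) sqrt(1 - s^2)), where a(y) = (e^y - 1)/(e^y + 1). -/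
/-!
Write `r = √(1 - s²)` and `e^{d_s} = (1 + r)/s`. Since `(1 + r)(1 - r) = s²`, also
`e^{-d_s} = (1 - r)/s`, so with `E = e^{d_s x}` the quantity `g_x(s)` is the weighted average
`((1 + r)/s + E (1 - r)/s)/(1 + E)`, which rearranges to `(1/s)(1 - r (E - 1)/(E + 1))`.
-/

open Real

lemma div_one_add_eq_one_div_mul_one_sub (r s E : ℝ) (hs : s ≠ 0) (hE : 1 + E ≠ 0) :
    ((1 + r) / s + E * ((1 - r) / s)) / (1 + E) = 1 / s * (1 - (E - 1) / (E + 1) * r) := by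
  have hE' : E + 1 ≠ 0 := by rwa [add_comm]
  field_simp
  ring

lemma exp_log_one_add_sqrt_div {s : ℝ} (hs : 0 < s) :
    exp (log ((1 + √(1 - s ^ 2)) / s)) = (1 + √(1 - s ^ 2)) / s :=
  exp_log (by positivity)

lemma exp_neg_log_one_add_sqrt_div {s : ℝ} (hs0 : 0 < s) (hs1 : s ≤ 1) :
    exp (-log ((1 + √(1 - s ^ 2)) / s)) = (1 - √(1 - s ^ 2)) / s := by
  have hr : √(1 - s ^ 2) ^ 2 = 1 - s ^ 2 := sq_sqrt (by nlinarith)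
  have hr1 : 0 < 1 + √(1 - s ^ 2) := by positivity
  rw [exp_neg, exp_log_one_add_sqrt_div hs0, inv_div, div_eq_div_iff hr1.ne' hs0.ne']
  linear_combination hr

theorem g_x_formula_general (s x : ℝ) (hs : s ∈ Set.Ioo (0:ℝ) 1) :
    (Real.exp (Real.log ((1 + Real.sqrt (1 - s^2)) / s))
        + Real.exp (Real.log ((1 + Real.sqrt (1 - s^2)) / s) * (x - 1)))
      / (1 + Real.exp (Real.log ((1 + Real.sqrt (1 - s^2)) / s) * x))
    = (1 / s) *
        (1 - ((Real.exp (Real.log ((1 + Real.sqrt (1 - s^2)) / s) * x) - 1)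
              / (Real.exp (Real.log ((1 + Real.sqrt (1 - s^2)) / s) * x) + 1))
            * Real.sqrt (1 - s^2)) := by
  obtain ⟨hs0, hs1⟩ := hs
  set d := log ((1 + √(1 - s ^ 2)) / s)
  have hsplit : exp (d * (x - 1)) = exp (d * x) * exp (-d) := by
    rw [← exp_add]; ring_nf
  rw [hsplit, exp_log_one_add_sqrt_div hs0, exp_neg_log_one_add_sqrt_div hs0 hs1.le]
  exact div_one_add_eq_one_div_mul_one_sub _ _ _ hs0.ne' (by positivity)

theorem g_x_formula (s x : ℝ) (hs : s ∈ Set.Ioo (0:ℝ) 1) (hx : 0 < x) :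
    (Real.exp (Real.log ((1 + Real.sqrt (1 - s^2)) / s))
        + Real.exp (Real.log ((1 + Real.sqrt (1 - s^2)) / s) * (x - 1)))
      / (1 + Real.exp (Real.log ((1 + Real.sqrt (1 - s^2)) / s) * x))
    = (1 / s) *
        (1 - ((Real.exp (Real.log ((1 + Real.sqrt (1 - s^2)) / s) * x) - 1)
              / (Real.exp (Real.log ((1 + Real.sqrt (1 - s^2)) / s) * x) + 1))
            * Real.sqrt (1 - s^2)) :=
  g_x_formula_general s x hs
end

section
/- Let R_n be the range (max minus min) of the once-reinforced random walk on ℤ with parameter c = 1 (i.e., the simple symmetric random walk), and S_k = inf{n : R_n = k}. Then E[S_k] = binom(k+1, 2) = k(k+1)/2 for every k ≥ 1. -/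
/-!
Write `A ≤ X ≤ B` for the running minimum, the position and the running maximum of the walk and
`R = B - A` for its range. The potential `Φ = R (R + 1) - 2 (X - A) (B - X)` grows by exactly `2`
in conditional mean at every step: inside `[A, B]` because `(X - A) (B - X)` drops by `1` on
average, and at an extreme because the range may grow. So `Φₙ - 2 n` is a martingale, and
stopping it at the bounded time `Tₙ = min S_k n` gives `E[Tₙ] = E[Φ_{Tₙ}] / 2 ≤ k (k + 1) / 2`,
where the expectation of a function of the first `n` steps is an average over the `2 ^ n` sign
sequences. Hence `S_k < ∞` almost surely. At time `S_k` the walker sits at an extreme, so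
`Φ_{S_k} = k (k + 1)`, and letting `n → ∞` (dominated convergence for `Φ_{Tₙ}`, monotone
convergence for `Tₙ`) gives `E[S_k] = k (k + 1) / 2`.
-/

open MeasureTheory ProbabilityTheory Filter Topology

def intervalPotential (a x b : ℤ) : ℤ := (b - a) * (b - a + 1) - 2 * (x - a) * (b - x)

lemma intervalPotential_nonneg {a x b : ℤ} (hax : a ≤ x) (hxb : x ≤ b) :
    0 ≤ intervalPotential a x b := by
  unfold intervalPotential
  nlinarith [sq_nonneg ((x - a) - (b - x))]

lemma intervalPotential_le {a x b : ℤ} (hax : a ≤ x) (hxb : x ≤ b) :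
    intervalPotential a x b ≤ (b - a) * (b - a + 1) := by
  unfold intervalPotential
  nlinarith

lemma intervalPotential_of_eq_or_eq {a x b : ℤ} (h : x = a ∨ x = b) :
    intervalPotential a x b = (b - a) * (b - a + 1) := by
  rcases h with rfl | rfl <;> simp [intervalPotential]

lemma intervalPotential_step {a x b : ℤ} (hax : a ≤ x) (hxb : x ≤ b) :
    intervalPotential (min a (x + 1)) (x + 1) (max b (x + 1))
      + intervalPotential (min a (x - 1)) (x - 1) (max b (x - 1))
      = 2 * intervalPotential a x b + 4 := by
  have hmax : max b (x + 1) = if x = b then x + 1 else b := by split_ifs <;> omega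
  have hmin : min a (x - 1) = if x = a then x - 1 else a := by split_ifs <;> omega
  rw [min_eq_left (by omega : a ≤ x + 1), max_eq_left (by omega : x - 1 ≤ b), hmax, hmin]
  unfold intervalPotential
  split_ifs <;> subst_vars <;> ring

section Path

variable (s : ℕ → ℤ)

def pathPos (n : ℕ) : ℤ := ∑ i ∈ Finset.range n, s i

def pathMax (n : ℕ) : ℤ := (Finset.range (n + 1)).sup' Finset.nonempty_range_add_one (pathPos s)

def pathMin (n : ℕ) : ℤ := (Finset.range (n + 1)).inf' Finset.nonempty_range_add_one (pathPos s)

def pathRange (n : ℕ) : ℤ := pathMax s n - pathMin s n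

def rangePotential (n : ℕ) : ℤ := intervalPotential (pathMin s n) (pathPos s n) (pathMax s n)

noncomputable def rangeHit (k : ℕ) : ℕ := sInf {m | pathRange s m = k}

/-- This is `min (rangeHit s k) n` when the range `k` is ever reached; otherwise it is `n`, while
`rangeHit s k = sInf ∅ = 0`. -/
noncomputable def cappedRangeHit (k n : ℕ) : ℕ := sInf {m | pathRange s m = k ∨ n ≤ m}

@[simp] lemma pathPos_zero : pathPos s 0 = 0 := by simp [pathPos]

@[simp] lemma pathMax_zero : pathMax s 0 = 0 := by simp [pathMax]

@[simp] lemma pathMin_zero : pathMin s 0 = 0 := by simp [pathMin]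

@[simp] lemma pathRange_zero : pathRange s 0 = 0 := by simp [pathRange]

lemma pathPos_succ (n : ℕ) : pathPos s (n + 1) = pathPos s n + s n :=
  Finset.sum_range_succ _ _

lemma pathMax_succ (n : ℕ) : pathMax s (n + 1) = max (pathMax s n) (pathPos s (n + 1)) := by
  rw [pathMax, Finset.sup'_congr _ (Finset.range_add_one (n := n + 1)) (fun _ _ => rfl),
    Finset.sup'_insert, max_comm]
  rfl

lemma pathMin_succ (n : ℕ) : pathMin s (n + 1) = min (pathMin s n) (pathPos s (n + 1)) := by
  rw [pathMin, Finset.inf'_congr _ (Finset.range_add_one (n := n + 1)) (fun _ _ => rfl),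
    Finset.inf'_insert, min_comm]
  rfl

lemma pathMin_le_pathPos (n : ℕ) : pathMin s n ≤ pathPos s n :=
  Finset.inf'_le _ (Finset.self_mem_range_succ n)

lemma pathPos_le_pathMax (n : ℕ) : pathPos s n ≤ pathMax s n :=
  Finset.le_sup' _ (Finset.self_mem_range_succ n)

lemma pathRange_nonneg (n : ℕ) : 0 ≤ pathRange s n := by
  have := pathMin_le_pathPos s n
  have := pathPos_le_pathMax s n
  rw [pathRange]
  omega

variable {s} {t : ℕ → ℤ} {n : ℕ}

lemma pathPos_congr (h : ∀ i < n, s i = t i) : pathPos s n = pathPos t n :=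
  Finset.sum_congr rfl fun i hi => h i (Finset.mem_range.mp hi)

lemma pathMax_congr (h : ∀ i < n, s i = t i) : pathMax s n = pathMax t n :=
  Finset.sup'_congr _ rfl fun _ hj => pathPos_congr fun i hi =>
    h i (hi.trans_le (Nat.lt_succ_iff.mp (Finset.mem_range.mp hj)))

lemma pathMin_congr (h : ∀ i < n, s i = t i) : pathMin s n = pathMin t n :=
  Finset.inf'_congr _ rfl fun _ hj => pathPos_congr fun i hi =>
    h i (hi.trans_le (Nat.lt_succ_iff.mp (Finset.mem_range.mp hj)))

lemma pathRange_congr (h : ∀ i < n, s i = t i) : pathRange s n = pathRange t n := by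
  rw [pathRange, pathRange, pathMax_congr h, pathMin_congr h]

lemma rangePotential_congr (h : ∀ i < n, s i = t i) :
    rangePotential s n = rangePotential t n := by
  rw [rangePotential, rangePotential, pathMax_congr h, pathMin_congr h, pathPos_congr h]

variable (s n)

lemma rangePotential_update_add :
    rangePotential (Function.update s n 1) (n + 1)
      + rangePotential (Function.update s n (-1)) (n + 1) = 2 * rangePotential s n + 4 := by
  have hagree (c : ℤ) : ∀ i < n, Function.update s n c i = s i :=
    fun i hi => Function.update_of_ne (ne_of_lt hi) _ _
  have hpos (c : ℤ) : pathPos (Function.update s n c) (n + 1) = pathPos s n + c := by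
    rw [pathPos_succ, Function.update_self, pathPos_congr (hagree c)]
  have hmax (c : ℤ) :
      pathMax (Function.update s n c) (n + 1) = max (pathMax s n) (pathPos s n + c) := by
    rw [pathMax_succ, hpos, pathMax_congr (hagree c)]
  have hmin (c : ℤ) :
      pathMin (Function.update s n c) (n + 1) = min (pathMin s n) (pathPos s n + c) := by
    rw [pathMin_succ, hpos, pathMin_congr (hagree c)]
  simp only [rangePotential, hpos, hmax, hmin, ← sub_eq_add_neg]
  exact intervalPotential_step (pathMin_le_pathPos s n) (pathPos_le_pathMax s n)

variable {s n} {k m : ℕ}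

lemma pathRange_succ_le (hs : s m = 1 ∨ s m = -1) : pathRange s (m + 1) ≤ pathRange s m + 1 := by
  have := pathMin_le_pathPos s m
  have := pathPos_le_pathMax s m
  rw [pathRange, pathRange, pathMax_succ, pathMin_succ, pathPos_succ]
  omega

lemma pathPos_eq_pathMin_or_pathMax (h : pathRange s (m + 1) ≠ pathRange s m) :
    pathPos s (m + 1) = pathMin s (m + 1) ∨ pathPos s (m + 1) = pathMax s (m + 1) := by
  have := pathMin_le_pathPos s m
  have := pathPos_le_pathMax s m
  rw [pathRange, pathRange, pathMax_succ, pathMin_succ] at h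
  rw [pathMax_succ, pathMin_succ]
  omega

lemma rangePotential_eq_of_first_hit (hm : pathRange s m = k)
    (hfirst : ∀ j < m, pathRange s j ≠ k) : rangePotential s m = k * (k + 1) := by
  rcases m with _ | j
  · obtain rfl : k = 0 := by simp at hm; omega
    simp [rangePotential, intervalPotential]
  · have hext := pathPos_eq_pathMin_or_pathMax (hm ▸ (hfirst j j.lt_succ_self).symm)
    rw [rangePotential, intervalPotential_of_eq_or_eq hext, ← pathRange, hm]

lemma cappedRangeHit_le : cappedRangeHit s k n ≤ n :=
  Nat.sInf_le (Or.inr le_rfl)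

lemma cappedRangeHit_mono : Monotone (cappedRangeHit s k) := fun _ n' hn =>
  csInf_le_csInf' ⟨n', Or.inr le_rfl⟩ fun _ hm => hm.imp_right hn.trans

lemma cappedRangeHit_congr (h : ∀ i < n, s i = t i) :
    cappedRangeHit s k n = cappedRangeHit t k n := by
  refine congrArg sInf (Set.ext fun m => ?_)
  rcases lt_or_ge m n with hm | hm
  · simp only [Set.mem_ofPred_eq, pathRange_congr fun i hi => h i (hi.trans hm)]
  · simp [hm]

lemma pathRange_ne_of_lt_cappedRangeHit (hm : m < cappedRangeHit s k n) : pathRange s m ≠ k :=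
  fun h => Nat.notMem_of_lt_sInf hm (Or.inl h)

lemma cappedRangeHit_eq_of_pathRange_ne (h : pathRange s (cappedRangeHit s k n) ≠ k) :
    cappedRangeHit s k n = n :=
  le_antisymm cappedRangeHit_le
    ((Nat.sInf_mem (s := {m | pathRange s m = k ∨ n ≤ m}) ⟨n, Or.inr le_rfl⟩).resolve_left h)

lemma cappedRangeHit_eq_self (h : ∀ m < n, pathRange s m ≠ k) : cappedRangeHit s k n = n :=
  le_antisymm cappedRangeHit_le
    (le_csInf ⟨n, Or.inr le_rfl⟩ fun m hm => hm.elim (fun hm => not_lt.mp (h m · hm)) id)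

lemma cappedRangeHit_succ (h : pathRange s (cappedRangeHit s k n) = k) :
    cappedRangeHit s k (n + 1) = cappedRangeHit s k n :=
  le_antisymm (Nat.sInf_le (Or.inl h)) (cappedRangeHit_mono n.le_succ)

lemma pathRange_cappedRangeHit (hm : pathRange s m = k) (hmn : m ≤ n) :
    pathRange s (cappedRangeHit s k n) = k := by
  by_contra hT
  have hTn := cappedRangeHit_eq_of_pathRange_ne hT
  rcases hmn.lt_or_eq with hlt | rfl
  · exact pathRange_ne_of_lt_cappedRangeHit (hTn ▸ hlt) hm
  · exact hT (by rwa [hTn])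

lemma cappedRangeHit_eq_rangeHit (hm : pathRange s m = k) (hmn : m ≤ n) :
    cappedRangeHit s k n = rangeHit s k :=
  le_antisymm (Nat.sInf_le (Or.inl (Nat.sInf_mem (s := {m | pathRange s m = k}) ⟨m, hm⟩)))
    (Nat.sInf_le (pathRange_cappedRangeHit hm hmn))

lemma rangePotential_cappedRangeHit (h : pathRange s (cappedRangeHit s k n) = k) :
    rangePotential s (cappedRangeHit s k n) = k * (k + 1) :=
  rangePotential_eq_of_first_hit h fun _ hj => pathRange_ne_of_lt_cappedRangeHit hj

lemma rangePotential_cappedRangeHit_congr (h : ∀ i < n, s i = t i) :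
    rangePotential s (cappedRangeHit s k n) = rangePotential t (cappedRangeHit t k n) := by
  rw [cappedRangeHit_congr h, rangePotential_congr fun i hi => h i (hi.trans_le cappedRangeHit_le)]

lemma pathRange_le_of_le_cappedRangeHit (hs : ∀ i, s i = 1 ∨ s i = -1)
    (hm : m ≤ cappedRangeHit s k n) : pathRange s m ≤ k := by
  induction m with
  | zero => simp
  | succ j ih =>
    have := pathRange_ne_of_lt_cappedRangeHit (Nat.lt_of_succ_le hm)
    have := pathRange_succ_le (hs j)
    have := ih (by omega)
    omega

lemma rangePotential_cappedRangeHit_nonneg : 0 ≤ rangePotential s (cappedRangeHit s k n) :=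
  intervalPotential_nonneg (pathMin_le_pathPos _ _) (pathPos_le_pathMax _ _)

lemma rangePotential_cappedRangeHit_le (hs : ∀ i, s i = 1 ∨ s i = -1) :
    rangePotential s (cappedRangeHit s k n) ≤ k * (k + 1) := by
  have hR := pathRange_le_of_le_cappedRangeHit (k := k) (n := n) hs le_rfl
  have := pathRange_nonneg s (cappedRangeHit s k n)
  calc rangePotential s (cappedRangeHit s k n)
      ≤ pathRange s (cappedRangeHit s k n) * (pathRange s (cappedRangeHit s k n) + 1) :=
        intervalPotential_le (pathMin_le_pathPos _ _) (pathPos_le_pathMax _ _)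
    _ ≤ k * (k + 1) := by gcongr

end Path

noncomputable def stoppedRangeMartingale (s : ℕ → ℤ) (k n : ℕ) : ℤ :=
  rangePotential s (cappedRangeHit s k n) - 2 * cappedRangeHit s k n

lemma stoppedRangeMartingale_congr {s t : ℕ → ℤ} {k n : ℕ} (h : ∀ i < n, s i = t i) :
    stoppedRangeMartingale s k n = stoppedRangeMartingale t k n := by
  rw [stoppedRangeMartingale, stoppedRangeMartingale, rangePotential_cappedRangeHit_congr h,
    cappedRangeHit_congr h]

lemma stoppedRangeMartingale_update_add (s : ℕ → ℤ) (k n : ℕ) :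
    stoppedRangeMartingale (Function.update s n 1) k (n + 1)
      + stoppedRangeMartingale (Function.update s n (-1)) k (n + 1)
      = 2 * stoppedRangeMartingale s k n := by
  have hagree (c : ℤ) : ∀ i < n, Function.update s n c i = s i :=
    fun i hi => Function.update_of_ne (ne_of_lt hi) _ _
  by_cases hhit : pathRange s (cappedRangeHit s k n) = k
  · have hstop (c : ℤ) : stoppedRangeMartingale (Function.update s n c) k (n + 1)
        = stoppedRangeMartingale s k n := by
      have hR :
          pathRange (Function.update s n c) (cappedRangeHit (Function.update s n c) k n) = k := by
        rwa [cappedRangeHit_congr (hagree c),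
          pathRange_congr fun i hi => hagree c i (hi.trans_le cappedRangeHit_le)]
      rw [stoppedRangeMartingale, cappedRangeHit_succ hR, ← stoppedRangeMartingale,
        stoppedRangeMartingale_congr (hagree c)]
    rw [hstop, hstop]
    ring
  · have hTn := cappedRangeHit_eq_of_pathRange_ne hhit
    have hT (c : ℤ) : cappedRangeHit (Function.update s n c) k (n + 1) = n + 1 :=
      cappedRangeHit_eq_self fun m hm => by
        rw [pathRange_congr fun i hi => hagree c i (by omega)]
        rcases (Nat.lt_succ_iff.mp hm).lt_or_eq with hlt | rfl
        · exact pathRange_ne_of_lt_cappedRangeHit (hTn.symm ▸ hlt)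
        · rwa [hTn] at hhit
    have := rangePotential_update_add s n
    simp only [stoppedRangeMartingale, hT, hTn]
    push_cast
    linarith

open Classical in
/-- The `2 ^ n` sign sequences of length `n`, extended by `1` from time `n` on. -/
noncomputable def signPaths : ℕ → Finset (ℕ → ℤ)
  | 0 => {fun _ => 1}
  | n + 1 => (signPaths n ×ˢ {1, -1}).image fun p => Function.update p.1 n p.2

lemma mem_signPaths {n : ℕ} {s : ℕ → ℤ} :
    s ∈ signPaths n ↔ (∀ i < n, s i = 1 ∨ s i = -1) ∧ ∀ i, n ≤ i → s i = 1 := by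
  induction n generalizing s with
  | zero => simp [signPaths, funext_iff]
  | succ n ih =>
    classical
    simp only [signPaths, Finset.mem_image, Finset.mem_product, Finset.mem_insert,
      Finset.mem_singleton, Prod.exists]
    constructor
    · rintro ⟨t, c, ⟨ht, hc⟩, rfl⟩
      obtain ⟨ht₁, ht₂⟩ := ih.mp ht
      refine ⟨fun i hi => ?_, fun i hi => ?_⟩
      · rcases (Nat.lt_succ_iff.mp hi).lt_or_eq with hi | rfl
        · rw [Function.update_of_ne hi.ne]
          exact ht₁ i hi
        · simpa using hc
      · rw [Function.update_of_ne (by omega)]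
        exact ht₂ i (by omega)
    · rintro ⟨hs₁, hs₂⟩
      refine ⟨Function.update s n 1, s n, ⟨ih.mpr ⟨fun i hi => ?_, fun i hi => ?_⟩,
        hs₁ n n.lt_succ_self⟩, by simp⟩
      · rw [Function.update_of_ne hi.ne]
        exact hs₁ i (by omega)
      · rcases hi.lt_or_eq with hi | rfl
        · rw [Function.update_of_ne hi.ne']
          exact hs₂ i hi
        · simp

lemma sum_signPaths_succ {M : Type*} [AddCommMonoid M] (f : (ℕ → ℤ) → M) (n : ℕ) :
    ∑ s ∈ signPaths (n + 1), f s
      = ∑ s ∈ signPaths n, (f (Function.update s n 1) + f (Function.update s n (-1))) := by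
  classical
  rw [signPaths, Finset.sum_image, Finset.sum_product]
  · simp
  · rintro ⟨t, c⟩ htc ⟨t', c'⟩ htc' h
    simp only [Finset.coe_product, Set.mem_prod, Finset.mem_coe] at htc htc'
    have hc : c = c' := by simpa using congrFun h n
    refine Prod.ext (funext fun i => ?_) hc
    dsimp only
    rcases eq_or_ne i n with rfl | hi
    · rw [(mem_signPaths.mp htc.1).2 i le_rfl, (mem_signPaths.mp htc'.1).2 i le_rfl]
    · simpa [hi] using congrFun h i

lemma sum_signPaths_stoppedRangeMartingale (k n : ℕ) :
    ∑ s ∈ signPaths n, stoppedRangeMartingale s k n = 0 := by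
  induction n with
  | zero =>
    have hT (s : ℕ → ℤ) : cappedRangeHit s k 0 = 0 := Nat.le_zero.mp cappedRangeHit_le
    simp [signPaths, stoppedRangeMartingale, hT, rangePotential, intervalPotential]
  | succ n ih =>
    rw [sum_signPaths_succ, Finset.sum_congr rfl fun s _ => stoppedRangeMartingale_update_add s k n,
      ← Finset.mul_sum, ih, mul_zero]

section Rademacher

variable {Ω : Type*} [MeasurableSpace Ω]

structure IsRademacherSeq (μ : Measure Ω) (ξ : ℕ → Ω → ℤ) : Prop where
  measurable : ∀ i, Measurable (ξ i)
  indep : iIndepFun ξ μ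
  measure_eq_one : ∀ i, μ {ω | ξ i ω = 1} = 1 / 2
  measure_eq_neg_one : ∀ i, μ {ω | ξ i ω = -1} = 1 / 2

variable {μ : Measure Ω} {ξ : ℕ → Ω → ℤ}

namespace IsRademacherSeq

lemma measure_cylinder (hξ : IsRademacherSeq μ ξ) {n : ℕ} {s : ℕ → ℤ}
    (hs : ∀ i < n, s i = 1 ∨ s i = -1) :
    μ (⋂ i ∈ Finset.range n, ξ i ⁻¹' {s i}) = (1 / 2) ^ n := by
  have heach : ∀ i ∈ Finset.range n, μ (ξ i ⁻¹' {s i}) = 1 / 2 := fun i hi => by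
    rcases hs i (Finset.mem_range.mp hi) with h | h <;> rw [h]
    exacts [hξ.measure_eq_one i, hξ.measure_eq_neg_one i]
  rw [hξ.indep.meas_biInter fun i _ => ⟨{s i}, measurableSet_singleton _, rfl⟩,
    Finset.prod_congr rfl heach, Finset.prod_const, Finset.card_range]

variable [IsProbabilityMeasure μ]

lemma ae_eq_one_or_neg_one (hξ : IsRademacherSeq μ ξ) :
    ∀ᵐ ω ∂μ, ∀ i, ξ i ω = 1 ∨ ξ i ω = -1 := by
  refine ae_all_iff.mpr fun i => ?_
  have h₁ : MeasurableSet {ω | ξ i ω = 1} := hξ.measurable i (measurableSet_singleton 1)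
  have h₂ : MeasurableSet {ω | ξ i ω = -1} := hξ.measurable i (measurableSet_singleton (-1))
  have hdisj : Disjoint {ω | ξ i ω = 1} {ω | ξ i ω = -1} :=
    Set.disjoint_left.mpr fun ω h h' => by simp_all
  refine (prob_compl_eq_zero_iff (h₁.union h₂)).mpr ?_
  rw [measure_union hdisj h₂, hξ.measure_eq_one, hξ.measure_eq_neg_one, ENNReal.add_halves]

lemma comp_ae_eq_sum_indicator {E : Type*} [AddCommMonoid E] (hξ : IsRademacherSeq μ ξ)
    {n : ℕ} {F : (ℕ → ℤ) → E} (hF : DependsOn F (Set.Iio n)) :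
    (fun ω => F (fun i => ξ i ω)) =ᵐ[μ] fun ω => ∑ s ∈ signPaths n,
      (⋂ i ∈ Finset.range n, ξ i ⁻¹' {s i}).indicator (fun _ => F s) ω := by
  filter_upwards [hξ.ae_eq_one_or_neg_one] with ω hω
  set s₀ : ℕ → ℤ := fun i => if i < n then ξ i ω else 1
  have hs₀ : s₀ ∈ signPaths n :=
    mem_signPaths.mpr ⟨fun i hi => by simpa [s₀, hi] using hω i,
      fun i hi => by simp [s₀, not_lt.mpr hi]⟩
  have hmem {s : ℕ → ℤ} (hs : s ∈ signPaths n) :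
      ω ∈ ⋂ i ∈ Finset.range n, ξ i ⁻¹' {s i} ↔ s = s₀ := by
    simp only [Set.mem_iInter, Finset.mem_range, Set.mem_preimage, Set.mem_singleton_iff]
    refine ⟨fun h => funext fun i => ?_, fun h i hi => by simp [h, s₀, hi]⟩
    by_cases hi : i < n
    · simp [s₀, hi, h i hi]
    · simp [s₀, hi, (mem_signPaths.mp hs).2 i (not_lt.mp hi)]
  rw [Finset.sum_eq_single_of_mem s₀ hs₀ fun s hs hne =>
      Set.indicator_of_notMem (fun h => hne ((hmem hs).mp h)) _,
    Set.indicator_of_mem ((hmem hs₀).mpr rfl)]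
  exact hF fun i hi => by simp [s₀, Set.mem_Iio.mp hi]

lemma integrable_comp (hξ : IsRademacherSeq μ ξ) {n : ℕ} {F : (ℕ → ℤ) → ℝ}
    (hF : DependsOn F (Set.Iio n)) : Integrable (fun ω => F (fun i => ξ i ω)) μ :=
  (integrable_finsetSum _ fun _ _ => (integrable_const _).indicator
    (Finset.measurableSet_biInter _ fun i _ => hξ.measurable i (measurableSet_singleton _))).congr
    (hξ.comp_ae_eq_sum_indicator hF).symm

lemma integral_comp (hξ : IsRademacherSeq μ ξ) {n : ℕ} {F : (ℕ → ℤ) → ℝ}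
    (hF : DependsOn F (Set.Iio n)) :
    ∫ ω, F (fun i => ξ i ω) ∂μ = (1 / 2) ^ n * ∑ s ∈ signPaths n, F s := by
  have hcyl (s : ℕ → ℤ) : MeasurableSet (⋂ i ∈ Finset.range n, ξ i ⁻¹' {s i}) :=
    Finset.measurableSet_biInter _ fun i _ => hξ.measurable i (measurableSet_singleton _)
  rw [integral_congr_ae (hξ.comp_ae_eq_sum_indicator hF),
    integral_finsetSum _ fun s _ => (integrable_const _).indicator (hcyl s), Finset.mul_sum]
  refine Finset.sum_congr rfl fun s hs => ?_
  rw [integral_indicator_const _ (hcyl s), measureReal_def,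
    hξ.measure_cylinder (mem_signPaths.mp hs).1, smul_eq_mul]
  simp [ENNReal.toReal_pow]

lemma integrable_cappedRangeHit (hξ : IsRademacherSeq μ ξ) (k n : ℕ) :
    Integrable (fun ω => (cappedRangeHit (fun i => ξ i ω) k n : ℝ)) μ :=
  hξ.integrable_comp (F := fun s => (cappedRangeHit s k n : ℝ)) fun _ _ h =>
    congrArg _ (cappedRangeHit_congr h)

lemma integrable_rangePotential_cappedRangeHit (hξ : IsRademacherSeq μ ξ) (k n : ℕ) :
    Integrable (fun ω =>
      (rangePotential (fun i => ξ i ω) (cappedRangeHit (fun i => ξ i ω) k n) : ℝ)) μ :=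
  hξ.integrable_comp (F := fun s => (rangePotential s (cappedRangeHit s k n) : ℝ)) fun _ _ h =>
    congrArg _ (rangePotential_cappedRangeHit_congr h)

lemma integral_rangePotential_cappedRangeHit (hξ : IsRademacherSeq μ ξ) (k n : ℕ) :
    ∫ ω, (rangePotential (fun i => ξ i ω) (cappedRangeHit (fun i => ξ i ω) k n) : ℝ) ∂μ
      = 2 * ∫ ω, (cappedRangeHit (fun i => ξ i ω) k n : ℝ) ∂μ := by
  have hM := hξ.integral_comp (F := fun s => (stoppedRangeMartingale s k n : ℝ)) fun _ _ h =>
    congrArg _ (stoppedRangeMartingale_congr h)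
  rw [← Int.cast_sum, sum_signPaths_stoppedRangeMartingale, Int.cast_zero, mul_zero] at hM
  simp only [stoppedRangeMartingale, Int.cast_sub, Int.cast_mul, Int.cast_ofNat,
    Int.cast_natCast] at hM
  rwa [integral_sub (hξ.integrable_rangePotential_cappedRangeHit k n)
    ((hξ.integrable_cappedRangeHit k n).const_mul 2), integral_const_mul, sub_eq_zero] at hM

lemma integral_cappedRangeHit_le (hξ : IsRademacherSeq μ ξ) (k n : ℕ) :
    ∫ ω, (cappedRangeHit (fun i => ξ i ω) k n : ℝ) ∂μ ≤ k * (k + 1) / 2 := by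
  have hle : ∫ ω, (rangePotential (fun i => ξ i ω) (cappedRangeHit (fun i => ξ i ω) k n) : ℝ) ∂μ
      ≤ ∫ _, (k * (k + 1) : ℝ) ∂μ := by
    refine integral_mono_ae (hξ.integrable_rangePotential_cappedRangeHit k n)
      (integrable_const _) ?_
    filter_upwards [hξ.ae_eq_one_or_neg_one] with ω hω
    exact_mod_cast rangePotential_cappedRangeHit_le hω
  rw [integral_rangePotential_cappedRangeHit hξ, integral_const, probReal_univ, one_smul] at hle
  linarith

lemma ae_exists_pathRange_eq (hξ : IsRademacherSeq μ ξ) (k : ℕ) :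
    ∀ᵐ ω ∂μ, ∃ m, pathRange (fun i => ξ i ω) m = k := by
  set N := {ω | ¬∃ m, pathRange (fun i => ξ i ω) m = k}
  have hbound (n : ℕ) : n * μ.real N ≤ k * (k + 1) / 2 :=
    calc n * μ.real N
        ≤ n * μ.real {ω | (n : ℝ) ≤ cappedRangeHit (fun i => ξ i ω) k n} := by
          refine mul_le_mul_of_nonneg_left (measureReal_mono fun ω hω => ?_) n.cast_nonneg
          rw [Set.mem_ofPred_eq, cappedRangeHit_eq_self fun m _ h => hω ⟨m, h⟩]
      _ ≤ ∫ ω, (cappedRangeHit (fun i => ξ i ω) k n : ℝ) ∂μ :=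
          mul_meas_ge_le_integral_of_nonneg (ae_of_all _ fun _ => Nat.cast_nonneg _)
            (hξ.integrable_cappedRangeHit k n) _
      _ ≤ k * (k + 1) / 2 := integral_cappedRangeHit_le hξ k n
  have hN : μ.real N = 0 := by
    by_contra hne
    have hpos : 0 < μ.real N := measureReal_nonneg.lt_of_ne' hne
    obtain ⟨n, hn⟩ := exists_nat_gt (k * (k + 1) / 2 / μ.real N)
    have := hbound n
    rw [div_lt_iff₀ hpos] at hn
    linarith
  exact (measureReal_eq_zero_iff).mp hN

lemma tendsto_integral_cappedRangeHit (hξ : IsRademacherSeq μ ξ) (k : ℕ) :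
    Tendsto (fun n => ∫ ω, (cappedRangeHit (fun i => ξ i ω) k n : ℝ) ∂μ) atTop
      (𝓝 (k * (k + 1) / 2)) := by
  have hpot : Tendsto (fun n => ∫ ω,
      (rangePotential (fun i => ξ i ω) (cappedRangeHit (fun i => ξ i ω) k n) : ℝ) ∂μ) atTop
      (𝓝 (∫ _, (k * (k + 1) : ℝ) ∂μ)) := by
    refine tendsto_integral_of_dominated_convergence (fun _ => (k * (k + 1) : ℝ))
      (fun n => (hξ.integrable_rangePotential_cappedRangeHit k n).1) (integrable_const _)
      (fun n => ?_) ?_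
    · filter_upwards [hξ.ae_eq_one_or_neg_one] with ω hω
      rw [Real.norm_of_nonneg (by exact_mod_cast rangePotential_cappedRangeHit_nonneg)]
      exact_mod_cast rangePotential_cappedRangeHit_le hω
    · filter_upwards [hξ.ae_exists_pathRange_eq k] with ω ⟨m, hm⟩
      refine tendsto_atTop_of_eventually_const (i₀ := m) fun n hn => ?_
      rw [rangePotential_cappedRangeHit (pathRange_cappedRangeHit hm hn)]
      push_cast
      rfl
  rw [integral_const, probReal_univ, one_smul] at hpot
  refine (hpot.div_const 2).congr fun n => ?_
  rw [integral_rangePotential_cappedRangeHit hξ]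
  ring

theorem integral_rangeHit (hξ : IsRademacherSeq μ ξ) (k : ℕ) :
    ∫ ω, (rangeHit (fun i => ξ i ω) k : ℝ) ∂μ = k * (k + 1) / 2 := by
  have hT := hξ.integrable_cappedRangeHit k
  have hlim : ∀ᵐ ω ∂μ, Tendsto (fun n => (cappedRangeHit (fun i => ξ i ω) k n : ℝ)) atTop
      (𝓝 (rangeHit (fun i => ξ i ω) k)) := by
    filter_upwards [hξ.ae_exists_pathRange_eq k] with ω ⟨m, hm⟩
    exact tendsto_atTop_of_eventually_const (i₀ := m) fun n hn => by
      rw [cappedRangeHit_eq_rangeHit hm hn]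
  -- `rangeHit` is not yet known to be integrable, so monotone convergence goes through `∫⁻`.
  have hlintegral := lintegral_tendsto_of_tendsto_of_monotone
    (fun n => (hT n).aemeasurable.ennreal_ofReal)
    (ae_of_all _ fun ω _ _ h => ENNReal.ofReal_le_ofReal (Nat.cast_le.mpr (cappedRangeHit_mono h)))
    (hlim.mono fun _ h => ENNReal.tendsto_ofReal h)
  simp_rw [← ofReal_integral_eq_lintegral_ofReal (hT _) (ae_of_all _ fun _ => Nat.cast_nonneg _)]
    at hlintegral
  rw [integral_eq_lintegral_of_nonneg_ae (ae_of_all _ fun _ => Nat.cast_nonneg _)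
      (aestronglyMeasurable_of_tendsto_ae atTop (fun n => (hT n).1) hlim),
    tendsto_nhds_unique hlintegral (ENNReal.tendsto_ofReal (hξ.tendsto_integral_cappedRangeHit k)),
    ENNReal.toReal_ofReal (by positivity)]

end IsRademacherSeq

end Rademacher

theorem expected_time_range_increase_general {Ω : Type*} [MeasurableSpace Ω]
    (μ : Measure Ω) [IsProbabilityMeasure μ]
    (ξ : ℕ → Ω → ℤ) (hmeas : ∀ i, Measurable (ξ i))
    (hindep : iIndepFun ξ μ)
    (hdist : ∀ k, μ {ω | ξ k ω = 1} = 1/2 ∧ μ {ω | ξ k ω = -1} = 1/2)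
    (X : ℕ → Ω → ℤ) (hX : ∀ n ω, X n ω = ∑ k ∈ Finset.range n, ξ k ω)
    (R : ℕ → Ω → ℤ)
    (hR : ∀ n ω, R n ω
      = (Finset.range (n+1)).sup' Finset.nonempty_range_add_one (fun j => X j ω)
        - (Finset.range (n+1)).inf' Finset.nonempty_range_add_one (fun j => X j ω))
    (S : ℕ → Ω → ℕ) (hS : ∀ k ω, S k ω = sInf {n | R n ω = (k : ℤ)})
    (k : ℕ) :
    ∫ ω, (S k ω : ℝ) ∂μ = k * (k + 1) / 2 := by
  have hξ : IsRademacherSeq μ ξ := ⟨hmeas, hindep, fun i => (hdist i).1, fun i => (hdist i).2⟩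
  have hRpath (n : ℕ) (ω : Ω) : R n ω = pathRange (fun i => ξ i ω) n := by
    simp only [hR, hX]
    rfl
  have hSpath (ω : Ω) : S k ω = rangeHit (fun i => ξ i ω) k := by
    simp only [hS, hRpath]
    rfl
  simp only [hSpath]
  exact hξ.integral_rangeHit k

theorem expected_time_range_increase {Ω : Type*} [MeasurableSpace Ω]
    (μ : Measure Ω) [IsProbabilityMeasure μ]
    (ξ : ℕ → Ω → ℤ) (hmeas : ∀ i, Measurable (ξ i))
    (hindep : iIndepFun ξ μ)
    (hdist : ∀ k, μ {ω | ξ k ω = 1} = 1/2 ∧ μ {ω | ξ k ω = -1} = 1/2)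
    (X : ℕ → Ω → ℤ) (hX : ∀ n ω, X n ω = ∑ k ∈ Finset.range n, ξ k ω)
    (R : ℕ → Ω → ℤ)
    (hR : ∀ n ω, R n ω
      = (Finset.range (n+1)).sup' Finset.nonempty_range_add_one (fun j => X j ω)
        - (Finset.range (n+1)).inf' Finset.nonempty_range_add_one (fun j => X j ω))
    (S : ℕ → Ω → ℕ) (hS : ∀ k ω, S k ω = sInf {n | R n ω = (k : ℤ)})
    (k : ℕ) (hk : 1 ≤ k) :
    ∫ ω, (S k ω : ℝ) ∂μ = k * (k + 1) / 2 :=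
  expected_time_range_increase_general μ ξ hmeas hindep hdist X hX R hR S hS k
end

section
/- Let X be the once-reinforced random walk on ℤ with parameter c > 0, with M_n = max_{k ≤ n} X_k and m_n = min_{k ≤ n} X_k. Then the process N_n = X_n - ((1-c)/(1+c)) (Σ_{k<n} 1_{X_k = M_k} - Σ_{k<n} 1_{X_k = m_k}) is a martingale. -/
/-! Since the walk moves by `±1`, `X (n+1) - X n = 2 • 1_{up-step} - 1`, so subtracting the
compensator `∑ k < n, (2 p_k - 1)` of the conditional up-probabilities `p_k` leaves a martingale.
For the once-reinforced walk `2 p_k - 1 = (1-c)/(1+c) • (1_{X_k = M_k} - 1_{X_k = m_k})` in every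
case (both indicators are `1` only at `k = 0`, where `p_0 = 1/2`), so this compensator is exactly
the correction term. -/

open MeasureTheory ProbabilityTheory Finset

theorem Finset.measurable_range_inf'' {δ α : Type*} [MeasurableSpace δ] [MeasurableSpace α]
    [SemilatticeInf α] [MeasurableInf₂ α] {f : ℕ → δ → α} {n : ℕ}
    (hf : ∀ k ≤ n, Measurable (f k)) :
    Measurable fun x => (range (n + 1)).inf' nonempty_range_add_one fun k => f k x := by
  have h : Measurable ((range (n + 1)).inf' nonempty_range_add_one f) :=
    Finset.inf'_induction _ _ (fun _ hf _ hg => hf.inf hg)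
      fun k hk => hf k (Nat.lt_succ_iff.mp (mem_range.mp hk))
  convert h using 1
  ext x
  simp [Finset.inf'_apply]

theorem measurable_of_le_of_eq_iSup_comap {Ω β : Type*} [MeasurableSpace β]
    {ℱ : ℕ → MeasurableSpace Ω} {X : ℕ → Ω → β}
    (hℱ : ∀ n, ℱ n = ⨆ k ∈ Set.Iic n, MeasurableSpace.comap (X k) inferInstance)
    {k n : ℕ} (hkn : k ≤ n) : Measurable[ℱ n] (X k) := by
  rw [hℱ n, measurable_iff_comap_le]
  exact le_iSup₂ (f := fun k (_ : k ∈ Set.Iic n) => MeasurableSpace.comap (X k) _) k hkn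

theorem orrw_two_mul_upProb_sub_one {c : ℝ} (hc : 1 + c ≠ 0) (top bot : Prop) [Decidable top]
    [Decidable bot] :
    2 * (if top ∧ bot then 1 / 2 else if top then 1 / (1 + c) else if bot then c / (1 + c)
      else 1 / 2) - 1 = (1 - c) / (1 + c) * ((if top then 1 else 0) - if bot then 1 else 0) := by
  split_ifs <;> first | tauto | (field_simp; ring)

section Walk

variable {Ω : Type*} {X : ℕ → Ω → ℤ}

noncomputable def upStep (X : ℕ → Ω → ℤ) (n : ℕ) : Ω → ℝ :=
  {ω | X (n + 1) ω = X n ω + 1}.indicator fun _ => 1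

theorem sub_eq_two_mul_upStep_sub_one {n : ℕ} {ω : Ω}
    (hstep : X (n + 1) ω = X n ω + 1 ∨ X (n + 1) ω = X n ω - 1) :
    (X (n + 1) ω : ℝ) - X n ω = 2 * upStep X n ω - 1 := by
  rcases hstep with h | h
  · rw [upStep, Set.indicator_of_mem (by exact h), h]
    push_cast; ring
  · rw [upStep, Set.indicator_of_notMem (by simp only [Set.mem_ofPred_eq, h]; omega), h]
    push_cast; ring

variable [m0 : MeasurableSpace Ω]

theorem integrable_upStep {μ : Measure Ω} [IsFiniteMeasure μ] (hX : ∀ n, Measurable (X n))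
    (n : ℕ) : Integrable (upStep X n) μ :=
  (integrable_const 1).indicator
    (measurableSet_eq_fun (hX (n + 1)) ((hX n).add measurable_const))

theorem integrable_of_step_eq_add_one_or_sub_one {μ : Measure Ω} [IsFiniteMeasure μ]
    (hX : ∀ n, Measurable (X n)) (hX0 : Integrable (fun ω => (X 0 ω : ℝ)) μ)
    (hstep : ∀ n ω, X (n + 1) ω = X n ω + 1 ∨ X (n + 1) ω = X n ω - 1) (n : ℕ) :
    Integrable (fun ω => (X n ω : ℝ)) μ := by
  induction n with
  | zero => exact hX0
  | succ n ih =>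
    have hsucc : (fun ω => (X (n + 1) ω : ℝ)) = fun ω => X n ω + (2 * upStep X n ω - 1) := by
      ext ω
      rw [← sub_eq_two_mul_upStep_sub_one (hstep n ω)]
      ring
    rw [hsucc]
    exact ih.add (((integrable_upStep hX n).const_mul 2).sub (integrable_const 1))

theorem martingale_sub_sum_two_mul_upProb_sub_one {μ : Measure Ω} [IsFiniteMeasure μ]
    {ℱ : Filtration ℕ m0} (hX : ∀ n, Measurable[ℱ n] (X n))
    (hX0 : Integrable (fun ω => (X 0 ω : ℝ)) μ)
    (hstep : ∀ n ω, X (n + 1) ω = X n ω + 1 ∨ X (n + 1) ω = X n ω - 1)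
    {p : ℕ → Ω → ℝ} (hp : ∀ n, Measurable[ℱ n] (p n))
    (hcond : ∀ n, μ[upStep X n | ℱ n] =ᵐ[μ] p n) :
    Martingale (fun n ω => (X n ω : ℝ) - ∑ k ∈ range n, (2 * p k ω - 1)) ℱ μ := by
  have hXm : ∀ n, Measurable (X n) := fun n => (hX n).mono (ℱ.le n) le_rfl
  have hpi : ∀ n, Integrable (p n) μ := fun n => integrable_condExp.congr (hcond n)
  refine martingale_of_condExp_sub_eq_zero_nat (fun n => ?_) (fun n => ?_) fun n => ?_
  · refine (((measurable_of_countable _).comp (hX n)).sub ?_).stronglyMeasurable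
    refine Finset.measurable_fun_sum _ fun k hk => ?_
    exact (((hp k).mono (ℱ.mono (mem_range.mp hk).le) le_rfl).const_mul 2).sub_const 1
  · exact (integrable_of_step_eq_add_one_or_sub_one hXm hX0 hstep n).sub
      (integrable_finsetSum _ fun k _ => ((hpi k).const_mul 2).sub (integrable_const 1))
  · have hinc : (fun ω => (X (n + 1) ω : ℝ) - ∑ k ∈ range (n + 1), (2 * p k ω - 1))
        - (fun ω => (X n ω : ℝ) - ∑ k ∈ range n, (2 * p k ω - 1))
        = (2 : ℝ) • (upStep X n - p n) := by
      ext ω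
      simp only [Pi.sub_apply, Pi.smul_apply, smul_eq_mul, sum_range_succ]
      linear_combination sub_eq_two_mul_upStep_sub_one (hstep n ω)
    rw [hinc]
    calc μ[(2 : ℝ) • (upStep X n - p n) | ℱ n]
        =ᵐ[μ] (2 : ℝ) • μ[upStep X n - p n | ℱ n] := condExp_smul _ _ _
      _ =ᵐ[μ] (2 : ℝ) • (μ[upStep X n | ℱ n] - μ[p n | ℱ n]) :=
        (condExp_sub (integrable_upStep hXm n) (hpi n) _).const_smul 2
      _ =ᵐ[μ] 0 := by
        rw [condExp_of_stronglyMeasurable (ℱ.le n) (hp n).stronglyMeasurable (hpi n)]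
        filter_upwards [hcond n] with ω hω
        simp [hω]

end Walk

theorem orrw_martingale_general {Ω : Type*} [m0 : MeasurableSpace Ω]
    (μ : Measure Ω) [IsProbabilityMeasure μ]
    (c : ℝ) (hc : 0 < c)
    (X : ℕ → Ω → ℤ)
    (hX0 : ∀ ω, X 0 ω = 0)
    (hstep : ∀ n ω, X (n+1) ω = X n ω + 1 ∨ X (n+1) ω = X n ω - 1)
    (M : ℕ → Ω → ℤ)
    (hM : ∀ n ω, M n ω = (Finset.range (n+1)).sup' Finset.nonempty_range_add_one
      (fun k => X k ω))
    (m : ℕ → Ω → ℤ)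
    (hm : ∀ n ω, m n ω = (Finset.range (n+1)).inf' Finset.nonempty_range_add_one
      (fun k => X k ω))
    (ℱ : Filtration ℕ m0)
    (hℱ : ∀ n, ℱ n = ⨆ k ∈ Set.Iic n, MeasurableSpace.comap (X k) inferInstance)
    (hcond : ∀ n,
      (μ[Set.indicator {ω | X (n+1) ω = X n ω + 1} (fun _ => (1 : ℝ)) | ℱ n])
        =ᵐ[μ] fun ω =>
          if X n ω = M n ω ∧ X n ω = m n ω then 1/2
          else if X n ω = M n ω then 1/(1+c)
          else if X n ω = m n ω then c/(1+c)
          else 1/2) :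
    Martingale
      (fun n ω => (X n ω : ℝ)
        - (1 - c)/(1 + c) *
          ((∑ k ∈ Finset.range n, if X k ω = M k ω then (1:ℝ) else 0)
            - ∑ k ∈ Finset.range n, if X k ω = m k ω then (1:ℝ) else 0))
      ℱ μ := by
  have hXF : ∀ {k n}, k ≤ n → Measurable[ℱ n] (X k) := measurable_of_le_of_eq_iSup_comap hℱ
  have hMF : ∀ n, Measurable[ℱ n] (M n) := fun n => by
    rw [funext (hM n)]
    exact @Finset.measurable_range_sup'' ℤ _ Ω (ℱ n) _ _ X n fun k hk => hXF hk
  have hmF : ∀ n, Measurable[ℱ n] (m n) := fun n => by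
    rw [funext (hm n)]
    exact @Finset.measurable_range_inf'' Ω ℤ (ℱ n) _ _ _ X n fun k hk => hXF hk
  convert martingale_sub_sum_two_mul_upProb_sub_one (fun n => hXF le_rfl) (by simp [hX0]) hstep
    (fun n => ?_) hcond using 3 with n ω
  · simp only [orrw_two_mul_upProb_sub_one (by positivity : (1 : ℝ) + c ≠ 0), ← mul_sum,
      sum_sub_distrib]
  · have hXM := measurableSet_eq_fun (hXF le_rfl) (hMF n)
    have hXm := measurableSet_eq_fun (hXF le_rfl) (hmF n)
    exact Measurable.ite (hXM.inter hXm) measurable_const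
      (Measurable.ite hXM measurable_const (Measurable.ite hXm measurable_const measurable_const))

/-- For the once-reinforced random walk `X` on `ℤ` with parameter `c > 0`
(characterized by its step distribution conditional on its past), the process
`N_n = X_n - ((1-c)/(1+c)) (Σ_{k<n} 1_{X_k = M_k} - Σ_{k<n} 1_{X_k = m_k})`
is a martingale with respect to the natural filtration of `X`. -/
theorem orrw_martingale {Ω : Type*} [m0 : MeasurableSpace Ω]
    (μ : Measure Ω) [IsProbabilityMeasure μ]
    (c : ℝ) (hc : 0 < c)
    (X : ℕ → Ω → ℤ) (hmeas : ∀ n, Measurable (X n))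
    (hX0 : ∀ ω, X 0 ω = 0)
    (hstep : ∀ n ω, X (n+1) ω = X n ω + 1 ∨ X (n+1) ω = X n ω - 1)
    (M : ℕ → Ω → ℤ)
    (hM : ∀ n ω, M n ω = (Finset.range (n+1)).sup' Finset.nonempty_range_add_one
      (fun k => X k ω))
    (m : ℕ → Ω → ℤ)
    (hm : ∀ n ω, m n ω = (Finset.range (n+1)).inf' Finset.nonempty_range_add_one
      (fun k => X k ω))
    (ℱ : Filtration ℕ m0)
    (hℱ : ∀ n, ℱ n = ⨆ k ∈ Set.Iic n, MeasurableSpace.comap (X k) inferInstance)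
    (hcond : ∀ n,
      (μ[Set.indicator {ω | X (n+1) ω = X n ω + 1} (fun _ => (1 : ℝ)) | ℱ n])
        =ᵐ[μ] fun ω =>
          if X n ω = M n ω ∧ X n ω = m n ω then 1/2
          else if X n ω = M n ω then 1/(1+c)
          else if X n ω = m n ω then c/(1+c)
          else 1/2) :
    Martingale
      (fun n ω => (X n ω : ℝ)
        - (1 - c)/(1 + c) *
          ((∑ k ∈ Finset.range n, if X k ω = M k ω then (1:ℝ) else 0)
            - ∑ k ∈ Finset.range n, if X k ω = m k ω then (1:ℝ) else 0))
      ℱ μ :=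
  orrw_martingale_general (m0 := m0) μ c hc X hX0 hstep M hM m hm ℱ hℱ hcond
end
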